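/- For every (p,q)-clan γ (n = p+q), one has v(γ) ≤ u(γ) in the Bruhat order on S_n; that is, r_{v(γ)}(i,j) ≥ r_{u(γ)}(i,j) for all i,j ∈ {1,…,n}. -/

import Mathlib

open Finset Module

noncomputable section

/-- Symbols of an FS-pattern: `+`, `-`, `F` (first occurrence / opener),
`S` (second occurrence / closer). -/
inductive FSSymbol : Type
  | plus : FSSymbol
  | minus : FSSymbol
  | fst : FSSymbol
  | snd : FSSymbol
  deriving DecidableEq

/-- A `(p,q)`-clan on `{1,…,p+q}` (positions are `Fin (p+q)`, `0`-based).
`symbol i = Sum.inl j` means positions `i` and `j` carry the same natural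
number (they form an arc), and `symbol i = Sum.inr true` (resp. `false`)
means position `i` carries a `+` (resp. a `-`).  The number of `+`'s minus
the number of `-`'s equals `p - q`. -/
structure Clan (p q : ℕ) where
  symbol : Fin (p + q) → (Fin (p + q)) ⊕ Bool
  mate_ne : ∀ i j, symbol i = Sum.inl j → j ≠ i
  mate_invol : ∀ i j, symbol i = Sum.inl j → symbol j = Sum.inl i
  balance : (univ.filter fun i => symbol i = Sum.inr true).card + q
      = (univ.filter fun i => symbol i = Sum.inr false).card + p

namespace Clan

variable {p q : ℕ}

/-- `γ(i;+)`: the number of `+` signs and of arcs `(s,t)` with `t ≤ i`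
among the first `i` positions (`i` is `1`-based). -/
def cplus (γ : Clan p q) (i : ℕ) : ℕ :=
  (univ.filter fun k : Fin (p + q) =>
    k.val < i ∧ (γ.symbol k = Sum.inr true ∨ ∃ j, γ.symbol k = Sum.inl j ∧ j < k)).card

/-- `γ(i;-)`: the number of `-` signs and of arcs `(s,t)` with `t ≤ i`
among the first `i` positions (`i` is `1`-based). -/
def cminus (γ : Clan p q) (i : ℕ) : ℕ :=
  (univ.filter fun k : Fin (p + q) =>
    k.val < i ∧ (γ.symbol k = Sum.inr false ∨ ∃ j, γ.symbol k = Sum.inl j ∧ j < k)).card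

/-- `γ(i;j)`: the number of arcs `(s,t)` with `s ≤ i < j < t`
(`i`, `j` are `1`-based). -/
def cpair (γ : Clan p q) (i j : ℕ) : ℕ :=
  (univ.filter fun s : Fin (p + q) =>
    s.val < i ∧ ∃ t, γ.symbol s = Sum.inl t ∧ s < t ∧ j ≤ t.val).card

/-- The FS-pattern of a clan: signs stay, openers become `F`, closers `S`. -/
def FS (γ : Clan p q) (i : Fin (p + q)) : FSSymbol :=
  match γ.symbol i with
  | Sum.inr true => FSSymbol.plus
  | Sum.inr false => FSSymbol.minus
  | Sum.inl j => if j < i then FSSymbol.snd else FSSymbol.fst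

/-- A clan avoids the pattern `(1,2,1,2)` iff no two of its arcs cross. -/
def Avoids1212 (γ : Clan p q) : Prop :=
  ¬ ∃ i1 i2 i3 i4 : Fin (p + q), i1 < i2 ∧ i2 < i3 ∧ i3 < i4 ∧
      γ.symbol i1 = Sum.inl i3 ∧ γ.symbol i2 = Sum.inl i4

/-- `γ₊`: positions carrying a `+` or the second occurrence of a number. -/
def plusSet (γ : Clan p q) : Finset (Fin (p + q)) :=
  univ.filter fun i => γ.symbol i = Sum.inr true ∨ ∃ j, γ.symbol i = Sum.inl j ∧ j < i

/-- `γ̃₊`: positions carrying a `+` or the first occurrence of a number. -/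
def tplusSet (γ : Clan p q) : Finset (Fin (p + q)) :=
  univ.filter fun i => γ.symbol i = Sum.inr true ∨ ∃ j, γ.symbol i = Sum.inl j ∧ i < j

end Clan

/-- The rank matrix `r_w(i,j) = #{k ≤ i : w(k) ≤ j}` (`i`, `j` are `1`-based). -/
def rankMatrix {n : ℕ} (w : Equiv.Perm (Fin n)) (i j : ℕ) : ℕ :=
  (univ.filter fun k : Fin n => k.val < i ∧ (w k).val < j).card

/-- `u` is the permutation `u(γ)`: it assigns the values `p, p-1, …, 1` to the
positions of `γ₊` taken in increasing order, and `n, n-1, …, p+1` to the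
positions of `γ₋` taken in increasing order (values are `0`-based, so the
`1`-based value of `u` at `i` is `(u i).val + 1`). -/
def IsUPerm {p q : ℕ} (γ : Clan p q) (u : Equiv.Perm (Fin (p + q))) : Prop :=
  ∀ i : Fin (p + q),
    (i ∈ γ.plusSet → (u i).val + 1 + (γ.plusSet.filter fun j => j < i).card = p) ∧
    (i ∉ γ.plusSet →
      (u i).val + 1 + (univ.filter fun j => j ∉ γ.plusSet ∧ j < i).card = p + q)

/-- `v` is the permutation `v(γ)`: it assigns the values `1, …, p` to the
positions of `γ̃₊` taken in increasing order, and `p+1, …, n` to the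
positions of `γ̃₋` taken in increasing order (values are `0`-based). -/
def IsVPerm {p q : ℕ} (γ : Clan p q) (v : Equiv.Perm (Fin (p + q))) : Prop :=
  ∀ i : Fin (p + q),
    (i ∈ γ.tplusSet → (v i).val = (γ.tplusSet.filter fun j => j < i).card) ∧
    (i ∉ γ.tplusSet →
      (v i).val = p + (univ.filter fun j => j ∉ γ.tplusSet ∧ j < i).card)

/-- `E_j ⊆ ℂⁿ`: the span of the first `j` standard basis vectors, realized as
the subspace of vectors vanishing in coordinates `≥ j`. -/
def Efirst (n j : ℕ) : Submodule ℂ (Fin n → ℂ) :=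
  ⨅ k ∈ {k : Fin n | j ≤ k.val}, LinearMap.ker (LinearMap.proj k : (Fin n → ℂ) →ₗ[ℂ] ℂ)

/-- `Ẽ_j ⊆ ℂⁿ`: the span of the last `j` standard basis vectors, realized as
the subspace of vectors vanishing in coordinates `< n - j`. -/
def Elast (n j : ℕ) : Submodule ℂ (Fin n → ℂ) :=
  ⨅ k ∈ {k : Fin n | k.val < n - j}, LinearMap.ker (LinearMap.proj k : (Fin n → ℂ) →ₗ[ℂ] ℂ)

/-- The projection `π : ℂⁿ → E_p` with kernel `Ẽ_q` (for `n = p + q`). -/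
def projE (n p : ℕ) : (Fin n → ℂ) →ₗ[ℂ] (Fin n → ℂ) where
  toFun v := fun k => if k.val < p then v k else 0
  map_add' u v := by funext k; by_cases h : k.val < p <;> simp [h]
  map_smul' c v := by funext k; by_cases h : k.val < p <;> simp [h]

/-- A complete flag `F_0 ⊂ F_1 ⊂ ⋯ ⊂ F_n` in `ℂⁿ`, `dim F_i = i`. -/
structure CompleteFlag (n : ℕ) where
  F : Fin (n + 1) → Submodule ℂ (Fin n → ℂ)
  mono : Monotone F
  finrank_eq : ∀ i, finrank ℂ ↥(F i) = i.val

/-- Membership of a complete flag in the set `Q_γ`: the three linear-algebraic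
conditions of Theorem `orbit_description`. -/
def MemQ {p q : ℕ} (γ : Clan p q) (Fl : CompleteFlag (p + q)) : Prop :=
  (∀ i : ℕ, 1 ≤ i → ∀ hi : i ≤ p + q,
      finrank ℂ ↥(Fl.F ⟨i, by omega⟩ ⊓ Efirst (p + q) p) = γ.cplus i ∧
      finrank ℂ ↥(Fl.F ⟨i, by omega⟩ ⊓ Elast (p + q) q) = γ.cminus i) ∧
  (∀ i j : ℕ, 1 ≤ i → ∀ hij : i < j, ∀ hj : j ≤ p + q,
      finrank ℂ ↥((Fl.F ⟨i, by omega⟩).map (projE (p + q) p) ⊔ Fl.F ⟨j, by omega⟩)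
        = j + γ.cpair i j)

/-- Membership in `K = GL(p,ℂ) × GL(q,ℂ)`, the block-diagonal subgroup of
`GL(p+q, ℂ)`: all entries mixing the first `p` and last `q` coordinates
vanish. -/
def InK (p q : ℕ) (g : (Matrix (Fin (p + q)) (Fin (p + q)) ℂ)ˣ) : Prop :=
  ∀ i j : Fin (p + q), ¬(i.val < p ↔ j.val < p) →
    (g : Matrix (Fin (p + q)) (Fin (p + q)) ℂ) i j = 0

/-- `Fl' = g · Fl`: the flag `Fl'` is obtained by applying the invertible
matrix `g` to each subspace of the flag `Fl`. -/
def FlagMapsTo {n : ℕ} (g : (Matrix (Fin n) (Fin n) ℂ)ˣ) (Fl Fl' : CompleteFlag n) : Prop :=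
  ∀ i, Fl'.F i = (Fl.F i).map (Matrix.mulVecLin (g : Matrix (Fin n) (Fin n) ℂ))

/-- A partial matching of `{1,…,n}`, given by its set of arcs `(s,t)`, `s < t`;
distinct arcs are disjoint. -/
def IsPartialMatching {n : ℕ} (M : Finset (Fin n × Fin n)) : Prop :=
  (∀ a ∈ M, a.1 < a.2) ∧
  ∀ a ∈ M, ∀ b ∈ M, a ≠ b → a.1 ≠ b.1 ∧ a.1 ≠ b.2 ∧ a.2 ≠ b.1 ∧ a.2 ≠ b.2

/-- The number of crossing pairs of arcs of `M` (each crossing pair counted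
once, ordered by its smaller opener). -/
def crossNum {n : ℕ} (M : Finset (Fin n × Fin n)) : ℕ :=
  ((M ×ˢ M).filter fun ab =>
    ab.1.1 < ab.2.1 ∧ ab.2.1 < ab.1.2 ∧ ab.1.2 < ab.2.2).card

/-- `M` is a noncrossing partial matching whose openers are exactly the
`F`-positions of the pattern `d` and whose closers are exactly the
`S`-positions of `d`. -/
def MatchesPattern {n : ℕ} (d : Fin n → FSSymbol) (M : Finset (Fin n × Fin n)) : Prop :=
  IsPartialMatching M ∧
  (∀ i : Fin n, (∃ t, (i, t) ∈ M) ↔ d i = FSSymbol.fst) ∧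
  (∀ i : Fin n, (∃ s, (s, i) ∈ M) ↔ d i = FSSymbol.snd) ∧
  ¬ ∃ a ∈ M, ∃ b ∈ M, a.1 < b.1 ∧ b.1 < a.2 ∧ a.2 < b.2

/-- The values `{w(1),…,w(i)}` arranged in increasing order. -/
def sortedPrefix {n : ℕ} (w : Equiv.Perm (Fin n)) (i : ℕ) : List (Fin n) :=
  Finset.sort ((univ.filter fun k : Fin n => k.val < i).image w) (· ≤ ·)

/-!
The permutation `u` is decreasing on `γ₊` (values `p, …, 1`) and on `γ₋` (values `n, …, p+1`),
while `v` is increasing on `γ̃₊` and on `γ̃₋`. So if `a, a', b, b'` count the positions `≤ i` in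
`γ₊, γ₋, γ̃₊, γ̃₋`, then (with truncated subtraction)
`r_u(i,j) = (a - (p - j)) + (a' - (n - j))` and `r_v(i,j) = min b j + min b' (j - p)`.
Sending every second occurrence of a number to the first one and fixing the `+` signs injects
the positions `≤ i` of `γ₊` into those of `γ̃₊`, so `a ≤ b`; with `|γ₊| = |γ̃₊| = p` the
inequality is then arithmetic.
-/

namespace Finset

variable {α : Type*} [LinearOrder α]

def rankOf (A : Finset α) (k : α) : ℕ := #(A.filter (· < k))

lemma rankOf_lt_card {A : Finset α} {k : α} (hk : k ∈ A) : A.rankOf k < #A :=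
  card_lt_card (filter_ssubset.mpr ⟨k, hk, lt_irrefl k⟩)

lemma rankOf_strictMonoOn (A : Finset α) : StrictMonoOn A.rankOf A := by
  intro k₁ hk₁ k₂ _ hlt
  refine card_lt_card ⟨monotone_filter_right A fun _ _ hx => hx.trans hlt,
    fun hsub => ?_⟩
  simpa using (mem_filter.mp (hsub (mem_filter.mpr ⟨hk₁, hlt⟩))).2

lemma image_rankOf (A : Finset α) : A.image A.rankOf = range #A := by
  refine eq_of_subset_of_card_le (fun r hr => ?_) ?_
  · obtain ⟨k, hk, rfl⟩ := mem_image.mp hr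
    exact mem_range.mpr (rankOf_lt_card hk)
  · rw [card_range, card_image_of_injOn (rankOf_strictMonoOn A).injOn]

variable {A B : Finset α} (hBA : B ⊆ A) (hB : ∀ x ∈ A, ∀ y ∈ B, x < y → x ∈ B)
include hBA hB

lemma rankOf_of_initial {k : α} (hk : k ∈ B) : A.rankOf k = B.rankOf k := by
  unfold rankOf
  congr 1
  ext x
  simp only [mem_filter]
  exact ⟨fun ⟨hxA, hxk⟩ => ⟨hB x hxA k hk hxk, hxk⟩, fun ⟨hxB, hxk⟩ => ⟨hBA hxB, hxk⟩⟩

lemma image_rankOf_of_initial :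
    B.image A.rankOf = range #B := by
  rw [image_congr fun k hk => rankOf_of_initial hBA hB hk, image_rankOf]

lemma card_filter_rankOf_of_initial (P : ℕ → Prop) [DecidablePred P] :
    #(B.filter fun k => P (A.rankOf k)) = #((range #B).filter P) := by
  rw [← image_rankOf_of_initial hBA hB, filter_image,
    card_image_of_injOn ((rankOf_strictMonoOn A).injOn.mono ?_)]
  exact fun k hk => hBA (mem_filter.mp hk).1

variable {f : α → ℕ} {c : ℕ}

lemma card_filter_lt_of_add_rankOf_eq (hf : ∀ k ∈ A, f k + 1 + A.rankOf k = c) (j : ℕ) :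
    #(B.filter fun k => f k < j) = #B - (c - j) := by
  have hfB : ∀ k ∈ B, f k < j ↔ c ≤ j + A.rankOf k := fun k hk => by
    have := hf k (hBA hk); omega
  rw [filter_congr hfB, card_filter_rankOf_of_initial hBA hB (fun r => c ≤ j + r)]
  rw [show (range #B).filter (fun r => c ≤ j + r) = Ico (c - j) #B by ext; simp; omega,
    Nat.card_Ico]

lemma card_filter_lt_of_eq_add_rankOf (hf : ∀ k ∈ A, f k = c + A.rankOf k) (j : ℕ) :
    #(B.filter fun k => f k < j) = min #B (j - c) := by
  have hfB : ∀ k ∈ B, f k < j ↔ c + A.rankOf k < j := fun k hk => by rw [hf k (hBA hk)]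
  rw [filter_congr hfB, card_filter_rankOf_of_initial hBA hB (fun r => c + r < j)]
  rw [show (range #B).filter (fun r => c + r < j) = range (min #B (j - c)) by ext; simp; omega,
    card_range]

end Finset

lemma Fin.filter_val_lt_initial {n : ℕ} (A : Finset (Fin n)) (i : ℕ) :
    ∀ x ∈ A, ∀ y ∈ A.filter (fun k => k.val < i), x < y → x ∈ A.filter (fun k => k.val < i) := by
  intro x hx y hy hxy
  simp only [mem_filter, Fin.lt_def] at hy hxy ⊢
  exact ⟨hx, by omega⟩

lemma Finset.card_filter_add_card_compl_filter {α : Type*} [Fintype α] [DecidableEq α]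
    (A : Finset α) (P : α → Prop) [DecidablePred P] :
    #(A.filter P) + #(Aᶜ.filter P) = #(univ.filter P) := by
  rw [← card_union_of_disjoint (disjoint_filter_filter disjoint_compl_right), ← filter_union,
    union_compl]

lemma Finset.rankOf_compl {n : ℕ} (A : Finset (Fin n)) (k : Fin n) :
    Aᶜ.rankOf k = #(univ.filter fun j => j ∉ A ∧ j < k) := by
  rw [rankOf]
  congr 1
  ext
  simp

lemma Fin.card_filter_val_lt_add_card_compl_filter {n i : ℕ} (hi : i ≤ n) (A : Finset (Fin n)) :
    #(A.filter fun k => k.val < i) + #(Aᶜ.filter fun k => k.val < i) = i := by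
  rw [card_filter_add_card_compl_filter, Fin.card_filter_val_lt, min_eq_right hi]

lemma rankMatrix_eq_add_compl {n : ℕ} (w : Equiv.Perm (Fin n)) (A : Finset (Fin n)) (i j : ℕ) :
    rankMatrix w i j = #((A.filter fun k => k.val < i).filter fun k => (w k).val < j)
      + #((Aᶜ.filter fun k => k.val < i).filter fun k => (w k).val < j) := by
  rw [rankMatrix, filter_filter, filter_filter, card_filter_add_card_compl_filter]

namespace Clan

variable {p q : ℕ} (γ : Clan p q)

def mate (k : Fin (p + q)) : Fin (p + q) := Sum.elim id (fun _ => k) (γ.symbol k)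

variable {γ}

lemma mate_of_symbol_eq_inl {k j : Fin (p + q)} (h : γ.symbol k = Sum.inl j) : γ.mate k = j := by
  simp [mate, h]

lemma mate_of_symbol_eq_inr {k : Fin (p + q)} {b : Bool} (h : γ.symbol k = Sum.inr b) :
    γ.mate k = k := by
  simp [mate, h]

variable (γ)

lemma mate_involutive : Function.Involutive γ.mate := by
  intro k
  rcases h : γ.symbol k with j | b
  · rw [mate_of_symbol_eq_inl h, mate_of_symbol_eq_inl (γ.mate_invol _ _ h)]
  · rw [mate_of_symbol_eq_inr h, mate_of_symbol_eq_inr h]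

variable {γ}

lemma mate_mem_tplusSet {k : Fin (p + q)} (hk : k ∈ γ.plusSet) :
    γ.mate k ∈ γ.tplusSet ∧ γ.mate k ≤ k := by
  simp only [plusSet, tplusSet, mem_filter, mem_univ, true_and] at hk ⊢
  rcases hk with hplus | ⟨j, hj, hjk⟩
  · rw [mate_of_symbol_eq_inr hplus]
    exact ⟨Or.inl hplus, le_rfl⟩
  · rw [mate_of_symbol_eq_inl hj]
    exact ⟨Or.inr ⟨k, γ.mate_invol _ _ hj, hjk⟩, hjk.le⟩

lemma mate_mem_plusSet {k : Fin (p + q)} (hk : k ∈ γ.tplusSet) : γ.mate k ∈ γ.plusSet := by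
  simp only [plusSet, tplusSet, mem_filter, mem_univ, true_and] at hk ⊢
  rcases hk with hplus | ⟨j, hj, hkj⟩
  · rw [mate_of_symbol_eq_inr hplus]
    exact Or.inl hplus
  · rw [mate_of_symbol_eq_inl hj]
    exact Or.inr ⟨k, γ.mate_invol _ _ hj, hkj⟩

variable (γ)

lemma card_filter_plusSet_le_card_filter_tplusSet (i : ℕ) :
    #(γ.plusSet.filter fun k => k.val < i) ≤ #(γ.tplusSet.filter fun k => k.val < i) := by
  refine card_le_card_of_injOn γ.mate (fun k hk => ?_) γ.mate_involutive.injective.injOn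
  obtain ⟨hk, hki⟩ := mem_filter.mp hk
  obtain ⟨hmate, hle⟩ := mate_mem_tplusSet hk
  exact mem_filter.mpr ⟨hmate, lt_of_le_of_lt (Fin.le_def.mp hle) hki⟩

lemma card_plusSet_eq_card_tplusSet : #γ.plusSet = #γ.tplusSet :=
  le_antisymm
    (card_le_card_of_injOn γ.mate (fun _ hk => (mate_mem_tplusSet hk).1)
      γ.mate_involutive.injective.injOn)
    (card_le_card_of_injOn γ.mate (fun _ hk => mate_mem_plusSet hk)
      γ.mate_involutive.injective.injOn)

lemma plusSet_inter_tplusSet :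
    γ.plusSet ∩ γ.tplusSet = univ.filter fun k => γ.symbol k = Sum.inr true := by
  ext k
  simp only [plusSet, tplusSet, mem_inter, mem_filter, mem_univ, true_and]
  rcases γ.symbol k with j | b
  · simpa using fun h : j < k => lt_asymm h
  · simp

lemma compl_plusSet_union_tplusSet :
    (γ.plusSet ∪ γ.tplusSet)ᶜ = univ.filter fun k => γ.symbol k = Sum.inr false := by
  ext k
  simp only [plusSet, tplusSet, mem_compl, mem_union, mem_filter, mem_univ, true_and]
  rcases h : γ.symbol k with j | b
  · simpa using (γ.mate_ne k j h).lt_or_gt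
  · cases b <;> simp

/-- `γ₊ ∪ γ̃₊` misses exactly the `-` signs and `γ₊ ∩ γ̃₊` consists of the `+` signs, so
`|γ₊| + |γ̃₊| = n - #(-) + #(+) = 2p`. -/
lemma card_plusSet : #γ.plusSet = p := by
  have hunion := card_union_add_card_inter γ.plusSet γ.tplusSet
  have hcompl := card_compl_add_card (γ.plusSet ∪ γ.tplusSet)
  rw [plusSet_inter_tplusSet, ← card_plusSet_eq_card_tplusSet] at hunion
  rw [compl_plusSet_union_tplusSet, Fintype.card_fin] at hcompl
  have := γ.balance
  omega

lemma card_tplusSet : #γ.tplusSet = p := γ.card_plusSet_eq_card_tplusSet ▸ γ.card_plusSet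

end Clan

section Permutations

variable {p q : ℕ} {γ : Clan p q}

lemma IsUPerm.rankMatrix_eq {u : Equiv.Perm (Fin (p + q))} (hu : IsUPerm γ u) (i j : ℕ) :
    rankMatrix u i j = (#(γ.plusSet.filter fun k => k.val < i) - (p - j))
      + (#(γ.plusSetᶜ.filter fun k => k.val < i) - (p + q - j)) := by
  have hplus : ∀ k ∈ γ.plusSet, (u k).val + 1 + γ.plusSet.rankOf k = p :=
    fun k hk => (hu k).1 hk
  have hminus : ∀ k ∈ γ.plusSetᶜ, (u k).val + 1 + γ.plusSetᶜ.rankOf k = p + q :=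
    fun k hk => rankOf_compl γ.plusSet k ▸ (hu k).2 (mem_compl.mp hk)
  rw [rankMatrix_eq_add_compl u γ.plusSet,
    card_filter_lt_of_add_rankOf_eq (filter_subset _ _) (Fin.filter_val_lt_initial _ i) hplus,
    card_filter_lt_of_add_rankOf_eq (filter_subset _ _) (Fin.filter_val_lt_initial _ i) hminus]

lemma IsVPerm.rankMatrix_eq {v : Equiv.Perm (Fin (p + q))} (hv : IsVPerm γ v) (i j : ℕ) :
    rankMatrix v i j = min #(γ.tplusSet.filter fun k => k.val < i) j
      + min #(γ.tplusSetᶜ.filter fun k => k.val < i) (j - p) := by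
  have hplus : ∀ k ∈ γ.tplusSet, (v k).val = 0 + γ.tplusSet.rankOf k :=
    fun k hk => ((hv k).1 hk).trans (zero_add _).symm
  have hminus : ∀ k ∈ γ.tplusSetᶜ, (v k).val = p + γ.tplusSetᶜ.rankOf k :=
    fun k hk => rankOf_compl γ.tplusSet k ▸ (hv k).2 (mem_compl.mp hk)
  rw [rankMatrix_eq_add_compl v γ.tplusSet,
    card_filter_lt_of_eq_add_rankOf (filter_subset _ _) (Fin.filter_val_lt_initial _ i) hplus,
    card_filter_lt_of_eq_add_rankOf (filter_subset _ _) (Fin.filter_val_lt_initial _ i) hminus,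
    Nat.sub_zero]

end Permutations

theorem vPerm_le_uPerm_general {p q : ℕ} (γ : Clan p q)
    (u v : Equiv.Perm (Fin (p + q))) (hu : IsUPerm γ u) (hv : IsVPerm γ v) :
    ∀ i j : ℕ, 1 ≤ i → i ≤ p + q → 1 ≤ j → j ≤ p + q →
      rankMatrix u i j ≤ rankMatrix v i j := by
  intro i j _ hi _ _
  rw [hu.rankMatrix_eq, hv.rankMatrix_eq]
  have hsplit_plus := Fin.card_filter_val_lt_add_card_compl_filter hi γ.plusSet
  have hsplit_tplus := Fin.card_filter_val_lt_add_card_compl_filter hi γ.tplusSet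
  have hmate := γ.card_filter_plusSet_le_card_filter_tplusSet i
  have hplus_le : #(γ.plusSet.filter fun k => k.val < i) ≤ p :=
    (card_le_card (filter_subset _ _)).trans_eq γ.card_plusSet
  have htminus_le : #(γ.tplusSetᶜ.filter fun k => k.val < i) ≤ q := by
    have := card_le_card (filter_subset (fun k : Fin (p + q) => k.val < i) γ.tplusSetᶜ)
    rw [card_compl, Fintype.card_fin, γ.card_tplusSet] at this
    omega
  omega

/-- For every `(p,q)`-clan `γ`, `v(γ) ≤ u(γ)` in the Bruhat
order: `r_{v(γ)}(i,j) ≥ r_{u(γ)}(i,j)` for all `i,j ∈ {1,…,n}`. -/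
theorem vPerm_le_uPerm {p q : ℕ} (hn : 1 ≤ p + q) (γ : Clan p q)
    (u v : Equiv.Perm (Fin (p + q))) (hu : IsUPerm γ u) (hv : IsVPerm γ v) :
    ∀ i j : ℕ, 1 ≤ i → i ≤ p + q → 1 ≤ j → j ≤ p + q →
      rankMatrix u i j ≤ rankMatrix v i j :=
  vPerm_le_uPerm_general γ u v hu hv
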